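/- arXiv:1603.00222 — 4 statements merged into one kernel-verified Lean document; each statement's English description precedes it below -/
import Mathlib

section
/- If f, g : ℝ → ℝ are smooth with f, g, f', g' nowhere vanishing, f'' and g'' nowhere vanishing (both non-affine), then the equation f(x)f''(x)g(y)g''(y) - (f'(x))²(g'(y))² = K₀ with constant K₀ ≠ 0 has no solutions on any open rectangle. -/
open Set
open scoped ContDiff

/-- If `(deriv φ)²` is constant on an open set containing a point where `φ'` and `φ''`
are both nonzero, we get a contradiction. -/
lemma sq_deriv_const_contra (φ : ℝ → ℝ) (hφ : ContDiff ℝ (⊤ : ℕ∞) φ)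
    (s : Set ℝ) (hs : IsOpen s) (p : ℝ) (hp : p ∈ s) (C : ℝ)
    (hc : ∀ x ∈ s, (deriv φ x) ^ 2 = C)
    (h1 : deriv φ p ≠ 0) (h2 : deriv (deriv φ) p ≠ 0) : False := by
  have hφ' : ContDiff ℝ ∞ (deriv φ) := (contDiff_infty_iff_deriv.mp (hφ.of_le (by simp))).2
  have hdiff : DifferentiableAt ℝ (deriv φ) p :=
    (hφ'.differentiable (by simp)).differentiableAt
  have hE : (fun x => (deriv φ x) ^ 2) =ᶠ[nhds p] fun _ => C := by
    filter_upwards [hs.mem_nhds hp] with x hx using hc x hx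
  have h0 : deriv (fun x => (deriv φ x) ^ 2) p = 0 := by
    rw [Filter.EventuallyEq.deriv_eq hE]; simp
  have h3 : deriv (fun x => (deriv φ x) ^ 2) p
      = 2 * deriv φ p * deriv (deriv φ) p := by
    rw [deriv_fun_pow hdiff 2]; norm_num
  rw [h3] at h0
  rcases mul_eq_zero.mp h0 with h | h
  · rcases mul_eq_zero.mp h with h | h
    · norm_num at h
    · exact h1 h
  · exact h2 h

/-- for f, g non-linear (f'', g'' nowhere zero) the equation
f f'' g g'' - (f')²(g')² = K₀ ≠ 0 has no solutions on any open rectangle. -/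
theorem stmt7 (f g : ℝ → ℝ) (K₀ : ℝ) (hK₀ : K₀ ≠ 0)
    (a b c d : ℝ) (hab : a < b) (hcd : c < d)
    (hf : ContDiff ℝ (⊤ : ℕ∞) f) (hg : ContDiff ℝ (⊤ : ℕ∞) g)
    (hf0 : ∀ x ∈ Ioo a b, f x ≠ 0) (hg0 : ∀ y ∈ Ioo c d, g y ≠ 0)
    (hf1 : ∀ x ∈ Ioo a b, deriv f x ≠ 0) (hg1 : ∀ y ∈ Ioo c d, deriv g y ≠ 0)
    (hf2 : ∀ x ∈ Ioo a b, deriv (deriv f) x ≠ 0)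
    (hg2 : ∀ y ∈ Ioo c d, deriv (deriv g) y ≠ 0)
    (heq : ∀ x ∈ Ioo a b, ∀ y ∈ Ioo c d,
      f x * deriv (deriv f) x * (g y * deriv (deriv g) y)
        - (deriv f x) ^ 2 * (deriv g y) ^ 2 = K₀) :
    False := by
  set F : ℝ → ℝ := fun x => f x * deriv (deriv f) x with hF
  set G : ℝ → ℝ := fun y => g y * deriv (deriv g) y with hG
  have x₀ : ℝ := 0
  have hx₀ : (a + b) / 2 ∈ Ioo a b := ⟨by linarith, by linarith⟩
  have hy₀ : (c + d) / 2 ∈ Ioo c d := ⟨by linarith, by linarith⟩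
  set p := (a + b) / 2
  set q := (c + d) / 2
  by_cases hD : ∃ y₀ ∈ Ioo c d, ∃ y₁ ∈ Ioo c d,
      G y₀ * (deriv g y₁) ^ 2 - G y₁ * (deriv g y₀) ^ 2 ≠ 0
  · obtain ⟨y₀, hy₀', y₁, hy₁', hDne⟩ := hD
    -- then (deriv f)² is constant on Ioo a b
    apply sq_deriv_const_contra f hf (Ioo a b) isOpen_Ioo p hx₀
      (K₀ * (G y₁ - G y₀) / (G y₀ * (deriv g y₁) ^ 2 - G y₁ * (deriv g y₀) ^ 2))
      ?_ (hf1 p hx₀) (hf2 p hx₀)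
    intro x hx
    have e0 := heq x hx y₀ hy₀'
    have e1 := heq x hx y₁ hy₁'
    field_simp
    simp only [hF, hG] at *
    linear_combination (g y₁ * deriv (deriv g) y₁) * e0
      - (g y₀ * deriv (deriv g) y₀) * e1
  · push_neg at hD
    -- G y = c' * (deriv g y)^2 for all y, with c' = G q / (deriv g q)^2
    have hQq : (deriv g q) ^ 2 ≠ 0 := pow_ne_zero _ (hg1 q hy₀)
    set c' := G q / (deriv g q) ^ 2 with hc'
    have hGly : ∀ y ∈ Ioo c d, G y = c' * (deriv g y) ^ 2 := by
      intro y hy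
      have := hD y hy q hy₀
      rw [hc', div_mul_eq_mul_div, eq_div_iff hQq]
      linarith [this]
    -- then (c' * F p - (deriv f p)^2) * (deriv g y)^2 = K₀
    have hA : c' * F p - (deriv f p) ^ 2 ≠ 0 := by
      intro h
      have e := heq p hx₀ q hy₀
      rw [show (F p : ℝ) = f p * deriv (deriv f) p from rfl] at h
      have hGq := hGly q hy₀
      apply hK₀
      rw [← e]
      simp only [hG] at hGq
      linear_combination (deriv g q) ^ 2 * h + (f p * deriv (deriv f) p) * hGq
    apply sq_deriv_const_contra g hg (Ioo c d) isOpen_Ioo q hy₀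
      (K₀ / (c' * F p - (deriv f p) ^ 2)) ?_ (hg1 q hy₀) (hg2 q hy₀)
    intro y hy
    have e := heq p hx₀ y hy
    have hGy := hGly y hy
    field_simp
    simp only [hF, hG] at *
    linear_combination e - (f p * deriv (deriv f) p) * hGy
end

section
/- Let f, g : ℝ → ℝ be smooth non-constant functions, positive with nowhere zero derivatives on open intervals, satisfying f''(x)g(y) + f(x)g''(y) = H₀ for all x, y with H₀ a constant. Then H₀ = 0. -/
open Set
open scoped ContDiff

/-- a product surface z = f(x)g(y) with both factors
non-constant and constant isotropic mean curvature H₀ = f''g + fg'' must be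
isotropic minimal: H₀ = 0. -/
theorem stmt11 (f g : ℝ → ℝ) (H₀ : ℝ) (a b c d : ℝ) (hab : a < b) (hcd : c < d)
    (hf : ContDiff ℝ (⊤ : ℕ∞) f) (hg : ContDiff ℝ (⊤ : ℕ∞) g)
    (hfpos : ∀ x ∈ Ioo a b, 0 < f x) (hgpos : ∀ y ∈ Ioo c d, 0 < g y)
    (hf1 : ∀ x ∈ Ioo a b, deriv f x ≠ 0) (hg1 : ∀ y ∈ Ioo c d, deriv g y ≠ 0)
    (heq : ∀ x ∈ Ioo a b, ∀ y ∈ Ioo c d,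
      deriv (deriv f) x * g y + f x * deriv (deriv g) y = H₀) :
    H₀ = 0 := by
  have hf' : ContDiff ℝ ∞ f := hf.of_le (by simp)
  have hg' : ContDiff ℝ ∞ g := hg.of_le (by simp)
  have hfd : Differentiable ℝ f := hf'.differentiable (by norm_num)
  have hf2 : ContDiff ℝ ∞ (deriv f) := (contDiff_infty_iff_deriv.mp hf').2
  have hf3 : ContDiff ℝ ∞ (deriv (deriv f)) := (contDiff_infty_iff_deriv.mp hf2).2
  have hgd : Differentiable ℝ g := hg'.differentiable (by norm_num)
  have hx₀ : (a + b) / 2 ∈ Ioo a b := ⟨by linarith, by linarith⟩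
  have hy₀ : (c + d) / 2 ∈ Ioo c d := ⟨by linarith, by linarith⟩
  set x₀ := (a + b) / 2
  set y₀ := (c + d) / 2
  -- Step 1: differentiate in x
  have eq1 : ∀ x ∈ Ioo a b, ∀ y ∈ Ioo c d,
      deriv (deriv (deriv f)) x * g y + deriv f x * deriv (deriv g) y = 0 := by
    intro x hx y hy
    have hconst : (fun t => deriv (deriv f) t * g y + f t * deriv (deriv g) y)
        =ᶠ[nhds x] (fun _ => H₀) := by
      filter_upwards [Ioo_mem_nhds hx.1 hx.2] with t ht
      exact heq t ht y hy
    have hD : HasDerivAt (fun t => deriv (deriv f) t * g y + f t * deriv (deriv g) y)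
        (deriv (deriv (deriv f)) x * g y + deriv f x * deriv (deriv g) y) x :=
      (((hf3.differentiable (by norm_num)) x).hasDerivAt.mul_const _).add
        ((hfd x).hasDerivAt.mul_const _)
    have h0 := hconst.deriv_eq
    rw [deriv_const] at h0
    rw [hD.deriv] at h0
    exact h0
  set lam := deriv (deriv (deriv f)) x₀ / deriv f x₀ with hlam
  have hg2eq : ∀ y ∈ Ioo c d, deriv (deriv g) y = -lam * g y := by
    intro y hy
    have h := eq1 x₀ hx₀ y hy
    have hne := hf1 x₀ hx₀
    rw [hlam]
    field_simp
    linarith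
  have key : ∀ x ∈ Ioo a b, ∀ y ∈ Ioo c d,
      (deriv (deriv f) x - lam * f x) * g y = H₀ := by
    intro x hx y hy
    have h1 := heq x hx y hy
    rw [hg2eq y hy] at h1
    linear_combination h1
  -- Step 2: differentiate key in y at fixed x₀
  have hconst2 : (fun t => (deriv (deriv f) x₀ - lam * f x₀) * g t)
      =ᶠ[nhds y₀] (fun _ => H₀) := by
    filter_upwards [Ioo_mem_nhds hy₀.1 hy₀.2] with t ht
    exact key x₀ hx₀ t ht
  have hD2 : HasDerivAt (fun t => (deriv (deriv f) x₀ - lam * f x₀) * g t)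
      ((deriv (deriv f) x₀ - lam * f x₀) * deriv g y₀) y₀ :=
    ((hgd y₀).hasDerivAt.const_mul _)
  have h0 := hconst2.deriv_eq
  rw [deriv_const, hD2.deriv] at h0
  have hC : deriv (deriv f) x₀ - lam * f x₀ = 0 :=
    (mul_eq_zero.mp h0).resolve_right (hg1 y₀ hy₀)
  have := key x₀ hx₀ y₀ hy₀
  rw [hC, zero_mul] at this
  exact this.symm
end

section
/- Let h(x,y) = A(1 - e^{ax})(1 - e^{by}) with A > 0 and a, b < 0 (Spillman–Mitscherlich production function of 2 variables). Then K(x,y) = h_xx h_yy - (h_xy)² is not a constant function on ℝ₊². -/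
/-!
Writing `u = e^{ax}` and `v = e^{by}`, the curvature of the Spillman–Mitscherlich surface is
`K = A²a²b² u v (1 - u - v)`. For `x, y > 0` the pair `(u, v)` ranges over all of `(0,1)²`,
so `K` is positive at `u = v = 1/4` and negative at `u = v = 3/4`.
-/

open Set

/-- Relative (isotropic Gaussian) curvature of the Monge surface z = h(x,y). -/
noncomputable def relCurv (h : ℝ → ℝ → ℝ) (x y : ℝ) : ℝ :=
  deriv (deriv (fun x' => h x' y)) x * deriv (deriv (fun y' => h x y')) y -
    (deriv (fun y' => deriv (fun x' => h x' y') x) y) ^ 2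

open Real

theorem relCurv_mul (f g : ℝ → ℝ) (x y : ℝ) :
    relCurv (fun x y => f x * g y) x y =
      deriv (deriv f) x * g y * (f x * deriv (deriv g) y) - (deriv f x * deriv g y) ^ 2 := by
  simp only [relCurv, deriv_mul_const_field', deriv_const_mul_field']

theorem hasDerivAt_exp_mul (c t : ℝ) :
    HasDerivAt (fun t => exp (c * t)) (c * exp (c * t)) t := by
  simpa [mul_comm] using ((hasDerivAt_id t).const_mul c).exp

theorem deriv_exp_mul (c : ℝ) : deriv (fun t => exp (c * t)) = fun t => c * exp (c * t) :=
  funext fun t => (hasDerivAt_exp_mul c t).deriv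

theorem deriv_one_sub_exp_mul (c : ℝ) :
    deriv (fun t => 1 - exp (c * t)) = fun t => -(c * exp (c * t)) := by
  rw [deriv_const_sub', deriv_exp_mul]

theorem deriv_deriv_one_sub_exp_mul (c : ℝ) :
    deriv (deriv (fun t => 1 - exp (c * t))) = fun t => -(c ^ 2 * exp (c * t)) := by
  rw [deriv_one_sub_exp_mul]
  funext t
  rw [deriv.fun_neg, deriv_const_mul_field, deriv_exp_mul]
  ring

theorem relCurv_spillmanMitscherlich (A a b x y : ℝ) :
    relCurv (fun x y => A * (1 - exp (a * x)) * (1 - exp (b * y))) x y =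
      A ^ 2 * a ^ 2 * b ^ 2 * exp (a * x) * exp (b * y) * (1 - exp (a * x) - exp (b * y)) := by
  rw [relCurv_mul (fun x => A * (1 - exp (a * x))) (fun y => 1 - exp (b * y))]
  simp only [deriv_const_mul_field']
  -- separate passes: otherwise `simp` rewrites the inner `deriv` before the outer one can match
  simp only [deriv_deriv_one_sub_exp_mul]
  simp only [deriv_one_sub_exp_mul]
  ring

theorem exp_mul_log_div {a t : ℝ} (ha : a ≠ 0) (ht : 0 < t) : exp (a * (log t / a)) = t := by
  rw [mul_div_cancel₀ _ ha, exp_log ht]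

theorem log_div_pos_of_neg {a t : ℝ} (ha : a < 0) (ht₀ : 0 < t) (ht₁ : t < 1) :
    0 < log t / a :=
  div_pos_of_neg_of_neg (log_neg ht₀ ht₁) ha

/-- the relative curvature of the Spillman–Mitscherlich surface
z = A(1-e^{ax})(1-e^{by}) is not constant on ℝ₊². -/
theorem stmt16 (A a b : ℝ) (hA : 0 < A) (ha : a < 0) (hb : b < 0) :
    ¬ ∃ c : ℝ, ∀ x y : ℝ, 0 < x → 0 < y →
      relCurv (fun x y => A * (1 - Real.exp (a * x)) * (1 - Real.exp (b * y))) x y = c := by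
  rintro ⟨c, hc⟩
  have hdiag : ∀ t, 0 < t → t < 1 → A ^ 2 * a ^ 2 * b ^ 2 * t ^ 2 * (1 - 2 * t) = c := by
    intro t ht₀ ht₁
    rw [← hc _ _ (log_div_pos_of_neg ha ht₀ ht₁) (log_div_pos_of_neg hb ht₀ ht₁),
      relCurv_spillmanMitscherlich, exp_mul_log_div ha.ne ht₀, exp_mul_log_div hb.ne ht₀]
    ring
  have hD : 0 < A ^ 2 * a ^ 2 * b ^ 2 := by
    have := ha.ne; have := hb.ne
    positivity
  have hpos := hdiag (1 / 4) (by norm_num) (by norm_num)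
  have hneg := hdiag (3 / 4) (by norm_num) (by norm_num)
  linarith
end

section
/- Let h(x,y) = A x^{a₁} e^{b₁ x} y^{a₂} e^{b₂ y} on ℝ₊² with A > 0 and aᵢ² + bᵢ² ≠ 0 for i = 1,2. Then H = h_xx + h_yy is constant on ℝ₊² if and only if H ≡ 0 and a₁ = a₂ = 1, b₁ = b₂ = 0. -/
open Set Real

/-! Write `u(t) = t ^ a * exp (b * t)`, so that the surface is `A u₁(x) u₂(y)` and
`H = A (u₁'' u₂ + u₁ u₂'')`. Since neither `uᵢ` is constant, a separated expression of this
shape can only be constant if `u₁'' = μ u₁`, `u₂'' = -μ u₂` and the constant is `0`.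
On the other hand `u'' = u ((a/t + b)² - a/t²)`, and comparing coefficients of powers of `1/t`
in `u'' = μ u` gives `a(a - 1) = 0` and `b² = μ`. Hence `b₁² = -b₂²`, so `b₁ = b₂ = 0`,
and then `aᵢ ≠ 0` forces `aᵢ = 1`. -/

/-- Isotropic mean curvature of the Monge surface z = h(x,y). -/
noncomputable def isoMean (h : ℝ → ℝ → ℝ) (x y : ℝ) : ℝ :=
  deriv (deriv (fun x' => h x' y)) x + deriv (deriv (fun y' => h x y')) y

theorem isoMean_const_mul_mul (A : ℝ) (f g : ℝ → ℝ) (x y : ℝ) :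
    isoMean (fun x y => A * f x * g y) x y
      = A * (deriv (deriv f) x * g y + f x * deriv (deriv g) y) := by
  have hx : (fun x' => A * f x' * g y) = fun x' => f x' * (A * g y) := by
    funext x'; ring
  rw [isoMean, hx]
  simp only [deriv_mul_const_field', deriv_const_mul_field']
  ring

theorem exists_eq_mul_of_mul_add_mul_eq {α β K : Type*} [Field K]
    {f₁ g₁ : α → K} {f₂ g₂ : β → K} {s : Set α} {t : Set β} {c : K}
    (h : ∀ x ∈ s, ∀ y ∈ t, f₁ x * g₂ y + g₁ x * f₂ y = c)
    (hg₂ : ∃ y ∈ t, ∃ y' ∈ t, g₂ y ≠ g₂ y') :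
    ∃ μ, ∀ x ∈ s, f₁ x = μ * g₁ x := by
  obtain ⟨y, hy, y', hy', hne⟩ := hg₂
  refine ⟨-(f₂ y - f₂ y') / (g₂ y - g₂ y'), fun x hx => ?_⟩
  have hdiff : f₁ x * (g₂ y - g₂ y') + g₁ x * (f₂ y - f₂ y') = 0 := by
    linear_combination h x hx y hy - h x hx y' hy'
  field_simp [sub_ne_zero.mpr hne]
  linear_combination hdiff

theorem eq_zero_and_exists_eq_mul_of_mul_add_mul_eq {α β K : Type*} [Field K]
    {f₁ g₁ : α → K} {f₂ g₂ : β → K} {s : Set α} {t : Set β} {c : K}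
    (h : ∀ x ∈ s, ∀ y ∈ t, f₁ x * g₂ y + g₁ x * f₂ y = c)
    (hg₁ : ∃ x ∈ s, ∃ x' ∈ s, g₁ x ≠ g₁ x') (hg₂ : ∃ y ∈ t, ∃ y' ∈ t, g₂ y ≠ g₂ y') :
    c = 0 ∧ ∃ μ, (∀ x ∈ s, f₁ x = μ * g₁ x) ∧ ∀ y ∈ t, f₂ y = -μ * g₂ y := by
  obtain ⟨μ, hμ⟩ := exists_eq_mul_of_mul_add_mul_eq h hg₂
  obtain ⟨ν, hν⟩ := exists_eq_mul_of_mul_add_mul_eq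
    (f₁ := f₂) (g₁ := g₂) (f₂ := f₁) (g₂ := g₁) (c := c)
    (fun y hy x hx => by linear_combination h x hx y hy) hg₁
  have hprod : ∀ x ∈ s, ∀ y ∈ t, (μ + ν) * g₁ x * g₂ y = c := fun x hx y hy => by
    rw [← h x hx y hy, hμ x hx, hν y hy]
    ring
  obtain ⟨x, hx, x', hx', hne₁⟩ := hg₁
  obtain ⟨y, hy, y', hy', hne₂⟩ := hg₂
  have hμν : μ + ν = 0 := by
    have : (μ + ν) * ((g₁ x - g₁ x') * (g₂ y - g₂ y')) = 0 := by
      linear_combination hprod x hx y hy - hprod x hx y' hy' - hprod x' hx' y hy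
        + hprod x' hx' y' hy'
    exact (mul_eq_zero.mp this).resolve_right
      (mul_ne_zero (sub_ne_zero.mpr hne₁) (sub_ne_zero.mpr hne₂))
  refine ⟨by rw [← hprod x hx y hy, hμν, zero_mul, zero_mul], μ, hμ, fun y hy => ?_⟩
  rw [hν y hy, eq_neg_of_add_eq_zero_right hμν]

theorem coeffs_eq_zero_of_forall_pos {p q r : ℝ}
    (h : ∀ t : ℝ, 0 < t → p / t ^ 2 + q / t + r = 0) : p = 0 ∧ q = 0 ∧ r = 0 := by
  have h1 := h 1 one_pos
  have h2 := h 2 two_pos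
  have h3 := h 3 three_pos
  norm_num at h1 h2 h3
  exact ⟨by linarith, by linarith, by linarith⟩

noncomputable def powExp (a b t : ℝ) : ℝ := t ^ a * exp (b * t)

section powExp

variable {a b t : ℝ}

theorem powExp_pos (ht : 0 < t) : 0 < powExp a b t :=
  mul_pos (rpow_pos_of_pos ht a) (exp_pos _)

theorem hasDerivAt_powExp (ht : 0 < t) :
    HasDerivAt (powExp a b) (powExp a b t * (a / t + b)) t := by
  have hpow : HasDerivAt (fun s : ℝ => s ^ a) (a * t ^ (a - 1)) t :=
    hasDerivAt_rpow_const (Or.inl ht.ne')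
  have hexp : HasDerivAt (fun s : ℝ => exp (b * s)) (exp (b * t) * b) t := by
    simpa using ((hasDerivAt_id t).const_mul b).exp
  refine (hpow.mul hexp).congr_deriv ?_
  rw [rpow_sub_one ht.ne', powExp]
  field_simp

theorem deriv_deriv_powExp (ht : 0 < t) :
    deriv (deriv (powExp a b)) t = powExp a b t * ((a / t + b) ^ 2 - a / t ^ 2) := by
  have hderiv : deriv (powExp a b) =ᶠ[nhds t] fun s => powExp a b s * (a / s + b) := by
    filter_upwards [Ioi_mem_nhds ht] with s hs
    exact (hasDerivAt_powExp hs).deriv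
  have hquot : HasDerivAt (fun s => a / s + b) (-(a / t ^ 2)) t := by
    simpa [div_eq_mul_inv] using ((hasDerivAt_inv ht.ne').const_mul a).add_const b
  rw [hderiv.deriv_eq]
  exact (((hasDerivAt_powExp ht).mul hquot).congr_deriv (by ring)).deriv

theorem exists_powExp_ne (h : a ^ 2 + b ^ 2 ≠ 0) :
    ∃ s ∈ Ioi (0 : ℝ), ∃ t ∈ Ioi (0 : ℝ), powExp a b s ≠ powExp a b t := by
  by_contra! hconst
  have hderiv_zero : ∀ t : ℝ, 0 < t → 0 / t ^ 2 + a / t + b = 0 := by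
    intro t ht
    have hloc : powExp a b =ᶠ[nhds t] fun _ => powExp a b t := by
      filter_upwards [Ioi_mem_nhds ht] with s hs
      exact hconst s hs t ht
    have hzero := (hasDerivAt_powExp (a := a) (b := b) ht).unique
      ((hasDerivAt_const t (powExp a b t)).congr_of_eventuallyEq hloc)
    rw [zero_div, zero_add]
    exact (mul_eq_zero.mp hzero).resolve_left (powExp_pos ht).ne'
  obtain ⟨-, rfl, rfl⟩ := coeffs_eq_zero_of_forall_pos hderiv_zero
  exact h (by ring)

theorem coeffs_of_deriv_deriv_powExp_eq_mul {μ : ℝ}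
    (h : ∀ t ∈ Ioi (0 : ℝ), deriv (deriv (powExp a b)) t = μ * powExp a b t) :
    a * (a - 1) = 0 ∧ a * b = 0 ∧ b ^ 2 = μ := by
  have hcoeffs : ∀ t : ℝ, 0 < t → a * (a - 1) / t ^ 2 + 2 * a * b / t + (b ^ 2 - μ) = 0 := by
    intro t ht
    have hμ := h t ht
    rw [deriv_deriv_powExp ht, mul_comm μ] at hμ
    have := mul_left_cancel₀ (powExp_pos ht).ne' hμ
    field_simp at this ⊢
    linear_combination this
  obtain ⟨h₀, h₁, h₂⟩ := coeffs_eq_zero_of_forall_pos hcoeffs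
  exact ⟨h₀, by linarith, by linarith⟩

end powExp

/-- Corollary 3.5(B): the transcendental production surface
z = A x^{a₁} e^{b₁x} y^{a₂} e^{b₂y} has constant isotropic mean curvature iff
H ≡ 0 and a₁ = a₂ = 1, b₁ = b₂ = 0. -/
theorem stmt19 (A a₁ a₂ b₁ b₂ : ℝ) (hA : 0 < A)
    (h1 : a₁ ^ 2 + b₁ ^ 2 ≠ 0) (h2 : a₂ ^ 2 + b₂ ^ 2 ≠ 0) :
    (∃ c : ℝ, ∀ x y : ℝ, 0 < x → 0 < y →
        isoMean (fun x y =>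
          A * x ^ a₁ * Real.exp (b₁ * x) * y ^ a₂ * Real.exp (b₂ * y)) x y = c)
    ↔ ((∀ x y : ℝ, 0 < x → 0 < y →
        isoMean (fun x y =>
          A * x ^ a₁ * Real.exp (b₁ * x) * y ^ a₂ * Real.exp (b₂ * y)) x y = 0) ∧
       a₁ = 1 ∧ a₂ = 1 ∧ b₁ = 0 ∧ b₂ = 0) := by
  refine ⟨fun ⟨c, hc⟩ => ?_, fun hzero => ⟨0, hzero.1⟩⟩
  have hsurf : (fun x y => A * x ^ a₁ * exp (b₁ * x) * y ^ a₂ * exp (b₂ * y))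
      = fun x y => A * powExp a₁ b₁ x * powExp a₂ b₂ y := by
    funext x y; simp only [powExp]; ring
  have hsep : ∀ x ∈ Ioi (0 : ℝ), ∀ y ∈ Ioi (0 : ℝ),
      deriv (deriv (powExp a₁ b₁)) x * powExp a₂ b₂ y
        + powExp a₁ b₁ x * deriv (deriv (powExp a₂ b₂)) y = c / A := fun x hx y hy => by
    rw [eq_div_iff hA.ne', mul_comm, ← isoMean_const_mul_mul, ← hsurf, hc x y hx hy]
  obtain ⟨hc0, μ, hμ, hν⟩ :=
    eq_zero_and_exists_eq_mul_of_mul_add_mul_eq hsep (exists_powExp_ne h1) (exists_powExp_ne h2)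
  obtain ⟨hquad₁, -, rfl⟩ := coeffs_of_deriv_deriv_powExp_eq_mul hμ
  obtain ⟨hquad₂, -, hb⟩ := coeffs_of_deriv_deriv_powExp_eq_mul hν
  obtain rfl : b₁ = 0 := by nlinarith
  obtain rfl : b₂ = 0 := by nlinarith
  have ha₁ : a₁ = 1 :=
    sub_eq_zero.mp ((mul_eq_zero.mp hquad₁).resolve_left (by rintro rfl; exact h1 (by ring)))
  have ha₂ : a₂ = 1 :=
    sub_eq_zero.mp ((mul_eq_zero.mp hquad₂).resolve_left (by rintro rfl; exact h2 (by ring)))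
  obtain rfl : c = 0 := (div_eq_zero_iff.mp hc0).resolve_right hA.ne'
  exact ⟨hc, ha₁, ha₂, rfl, rfl⟩
end
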